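/- Markovian network characterization: given an electric network on a finite connected graph with parameters D_{xy} = D_{yx} > 0 and γ_{xy} = 1/γ_{yx} > 0 on edges, there exists an irreducible Markov chain with transitions P and stationary distribution μ satisfying D_{xy} = √(μ_x P_{xy} μ_y P_{yx}) and γ_{xy} = √(μ_x P_{xy}/(μ_y P_{yx})) if and only if Σ_{z∼x} D_{xz}γ_{xz} = Σ_{z∼x} D_{xz}γ_{zx} for every x ∈ V and Σ_{x∈V} Σ_{z∼x} D_{xz}γ_{zx} = 1. In this case μ_x = Σ_{z∼x} D_{xz}γ_{zx} and P_{xy} = D_{xy}γ_{xy}/μ_x. -/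

import Mathlib

/-!
A chain `P, μ` is recovered from its network through the edge flows: the two defining square
roots multiply to `μ x P x y = D x y γ x y`. Summing this over the out-edges of `x` gives `μ x`
by row-stochasticity, and over the in-edges by stationarity (using `D` symmetric); these are
the two balance conditions, and total mass one is the normalisation. Conversely, if the balance
conditions hold, `μ x := ∑_{z ∼ x} D x z γ z x` and `P x y := D x y γ x y / μ x` is a chain
with the given network, where connectivity is what makes every `μ x` positive.
-/

open Finset

variable {V : Type*} [Fintype V] [DecidableEq V]

/-- `P, μ` is an irreducible Markov chain on the graph `G` (positive transitions
exactly on edges) whose associated network parameters are `D, γ`. -/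
def IsChainFor (G : V → V → Prop) (D γ : V → V → ℝ)
    (P : V → V → ℝ) (μ : V → ℝ) [Fintype V] : Prop :=
  (∀ x y, G x y → 0 < P x y) ∧ (∀ x y, ¬ G x y → P x y = 0) ∧
  (∀ x, ∑ y, P x y = 1) ∧
  (∀ x, 0 < μ x) ∧ (∑ x, μ x = 1) ∧ (∀ y, ∑ x, μ x * P x y = μ y) ∧
  (∀ x y, G x y → D x y = Real.sqrt (μ x * P x y * (μ y * P y x)) ∧
    γ x y = Real.sqrt (μ x * P x y / (μ y * P y x)))

lemma Real.sqrt_mul_mul_sqrt_div {a b : ℝ} (ha : 0 ≤ a) (hb : 0 < b) :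
    √(a * b) * √(a / b) = a := by
  rw [← Real.sqrt_mul (by positivity), show a * b * (a / b) = a * a by field_simp,
    Real.sqrt_mul_self ha]

lemma Real.sqrt_mul_mul_mul_of_mul_eq_one {d g g' : ℝ} (hd : 0 ≤ d) (hg : g * g' = 1) :
    √(d * g * (d * g')) = d := by
  rw [show d * g * (d * g') = d * d * (g * g') by ring, hg, mul_one, Real.sqrt_mul_self hd]

lemma Real.sqrt_mul_div_mul_of_mul_eq_one {d g g' : ℝ} (hd : d ≠ 0) (hg₀ : 0 ≤ g)
    (hg : g * g' = 1) : √(d * g / (d * g')) = g := by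
  rw [mul_div_mul_left _ _ hd, eq_inv_of_mul_eq_one_right hg, div_inv_eq_mul,
    Real.sqrt_mul_self hg₀]

section Network

variable (G : V → V → Prop) [DecidableRel G] (D γ : V → V → ℝ)

def inflow (x : V) : ℝ := ∑ z ∈ univ.filter (fun z => G x z), D x z * γ z x

def outflow (x : V) : ℝ := ∑ z ∈ univ.filter (fun z => G x z), D x z * γ x z

noncomputable def networkChain (x y : V) : ℝ :=
  if G x y then D x y * γ x y / inflow G D γ x else 0

variable {G D γ}

omit [DecidableEq V] in
lemma inflow_pos (hGsym : ∀ x y, G x y → G y x) (hDpos : ∀ x y, G x y → 0 < D x y)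
    (hγpos : ∀ x y, G x y → 0 < γ x y) {x z : V} (hxz : G x z) : 0 < inflow G D γ x :=
  sum_pos' (fun z hz => by
      have hxz := (mem_filter.1 hz).2
      exact (mul_pos (hDpos x z hxz) (hγpos z x (hGsym x z hxz))).le)
    ⟨z, mem_filter.2 ⟨mem_univ z, hxz⟩,
      mul_pos (hDpos x z hxz) (hγpos z x (hGsym x z hxz))⟩

omit [DecidableEq V] in
/-- On a connected graph a vertex without neighbours is the only vertex, so it would carry
the whole (then empty) inflow. -/
lemma exists_adj_of_sum_inflow_eq_one (hconn : ∀ x y : V, Relation.ReflTransGen G x y)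
    (hsum : ∑ x, inflow G D γ x = 1) (x : V) : ∃ z, G x z := by
  by_contra! hx
  have hunique : ∀ y, y = x := fun y =>
    ((hconn x y).cases_head.resolve_right fun ⟨c, hxc, _⟩ => hx c hxc).symm
  have hinflow : inflow G D γ x = 0 := by simp [inflow, hx]
  rw [Fintype.sum_eq_single x fun y hy => absurd (hunique y) hy, hinflow] at hsum
  exact zero_ne_one hsum

omit [DecidableEq V] in
lemma inflow_mul_networkChain {x : V} (hx : inflow G D γ x ≠ 0) (y : V) :
    inflow G D γ x * networkChain G D γ x y = if G x y then D x y * γ x y else 0 := by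
  unfold networkChain
  split_ifs
  · exact mul_div_cancel₀ _ hx
  · exact mul_zero _

end Network

namespace IsChainFor

variable {G : V → V → Prop} {D γ P : V → V → ℝ} {μ : V → ℝ}

omit [DecidableEq V] in
lemma mu_mul_eq (hc : IsChainFor G D γ P μ) (hGsym : ∀ x y, G x y → G y x) ⦃x y : V⦄
    (hxy : G x y) : μ x * P x y = D x y * γ x y := by
  obtain ⟨hPpos, -, -, hμpos, -, -, hnet⟩ := hc
  obtain ⟨hD, hγ⟩ := hnet x y hxy
  rw [hD, hγ, Real.sqrt_mul_mul_sqrt_div (mul_pos (hμpos x) (hPpos x y hxy)).le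
    (mul_pos (hμpos y) (hPpos y x (hGsym x y hxy)))]

variable [DecidableRel G]

omit [DecidableEq V] in
lemma outflow_eq (hc : IsChainFor G D γ P μ) (hGsym : ∀ x y, G x y → G y x) (x : V) :
    outflow G D γ x = μ x := by
  have hflow := hc.mu_mul_eq hGsym
  obtain ⟨-, hPzero, hProw, -⟩ := hc
  calc outflow G D γ x = ∑ z ∈ univ.filter (fun z => G x z), μ x * P x z :=
        sum_congr rfl fun z hz => (hflow (mem_filter.1 hz).2).symm
    _ = ∑ z, μ x * P x z :=
        sum_filter_of_ne fun z _ h => by_contra fun hxz => h (by rw [hPzero x z hxz, mul_zero])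
    _ = μ x := by rw [← mul_sum, hProw x, mul_one]

omit [DecidableEq V] in
lemma eq_inflow (hc : IsChainFor G D γ P μ) (hGsym : ∀ x y, G x y → G y x)
    (hDsym : ∀ x y, D x y = D y x) (x : V) : μ x = inflow G D γ x := by
  have hflow := hc.mu_mul_eq hGsym
  obtain ⟨-, hPzero, -, -, -, hstat, -⟩ := hc
  calc μ x = ∑ z, μ z * P z x := (hstat x).symm
    _ = ∑ z ∈ univ.filter (fun z => G x z), μ z * P z x :=
        (sum_filter_of_ne fun z _ h =>
          by_contra fun hxz => h (by rw [hPzero z x (mt (hGsym z x) hxz), mul_zero])).symm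
    _ = inflow G D γ x := sum_congr rfl fun z hz => by
        rw [hflow (hGsym x z (mem_filter.1 hz).2), hDsym]

omit [DecidableEq V] in
lemma eq_div_inflow (hc : IsChainFor G D γ P μ) (hGsym : ∀ x y, G x y → G y x)
    (hDsym : ∀ x y, D x y = D y x) {x y : V} (hxy : G x y) :
    P x y = D x y * γ x y / inflow G D γ x := by
  have hμ := hc.eq_inflow hGsym hDsym x
  have hflow := hc.mu_mul_eq hGsym hxy
  obtain ⟨-, -, -, hμpos, -⟩ := hc
  rw [← hμ, eq_div_iff (hμpos x).ne', mul_comm, hflow]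

omit [DecidableEq V] in
lemma sum_inflow_eq_one (hc : IsChainFor G D γ P μ) (hGsym : ∀ x y, G x y → G y x)
    (hDsym : ∀ x y, D x y = D y x) : ∑ x, inflow G D γ x = 1 := by
  simp_rw [← hc.eq_inflow hGsym hDsym]
  exact hc.2.2.2.2.1

end IsChainFor

omit [DecidableEq V] in
theorem isChainFor_networkChain {G : V → V → Prop} [DecidableRel G] {D γ : V → V → ℝ}
    (hGsym : ∀ x y, G x y → G y x) (hDpos : ∀ x y, G x y → 0 < D x y)
    (hDsym : ∀ x y, D x y = D y x) (hγpos : ∀ x y, G x y → 0 < γ x y)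
    (hγanti : ∀ x y, G x y → γ x y * γ y x = 1) (hadj : ∀ x, ∃ z, G x z)
    (hbal : ∀ x, outflow G D γ x = inflow G D γ x) (hsum : ∑ x, inflow G D γ x = 1) :
    IsChainFor G D γ (networkChain G D γ) (inflow G D γ) := by
  have hμpos : ∀ x, 0 < inflow G D γ x := fun x =>
    inflow_pos hGsym hDpos hγpos (hadj x).choose_spec
  have hflow := fun x => inflow_mul_networkChain (G := G) (D := D) (γ := γ) (hμpos x).ne'
  refine ⟨fun x y hxy => ?_, fun x y hxy => if_neg hxy, fun x => ?_, hμpos, hsum,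
    fun y => ?_, fun x y hxy => ?_⟩
  · rw [networkChain, if_pos hxy]
    exact div_pos (mul_pos (hDpos x y hxy) (hγpos x y hxy)) (hμpos x)
  · rw [← mul_right_inj' (hμpos x).ne', mul_sum, mul_one]
    simp_rw [hflow, ← sum_filter]
    exact hbal x
  · calc ∑ x, inflow G D γ x * networkChain G D γ x y
          = ∑ x, if G y x then D y x * γ x y else 0 := by
            refine sum_congr rfl fun x _ => ?_
            rw [hflow, hDsym]
            exact if_congr ⟨hGsym x y, hGsym y x⟩ rfl rfl
      _ = inflow G D γ y := (sum_filter _ _).symm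
  · rw [hflow, hflow, if_pos hxy, if_pos (hGsym x y hxy), hDsym y x]
    exact ⟨(Real.sqrt_mul_mul_mul_of_mul_eq_one (hDpos x y hxy).le (hγanti x y hxy)).symm,
      (Real.sqrt_mul_div_mul_of_mul_eq_one (hDpos x y hxy).ne' (hγpos x y hxy).le
        (hγanti x y hxy)).symm⟩

theorem markovian_characterization_general
    (G : V → V → Prop) [DecidableRel G]
    (hGsym : ∀ x y, G x y → G y x)
    (hconn : ∀ x y : V, Relation.ReflTransGen G x y)
    (D γ : V → V → ℝ)
    (hDpos : ∀ x y, G x y → 0 < D x y)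
    (hDsym : ∀ x y, D x y = D y x)
    (hγpos : ∀ x y, G x y → 0 < γ x y)
    (hγanti : ∀ x y, G x y → γ x y * γ y x = 1) :
    ((∃ P μ, IsChainFor G D γ P μ) ↔
      ((∀ x, ∑ z ∈ univ.filter (fun z => G x z), D x z * γ x z =
          ∑ z ∈ univ.filter (fun z => G x z), D x z * γ z x) ∧
        ∑ x, ∑ z ∈ univ.filter (fun z => G x z), D x z * γ z x = 1)) ∧
    (∀ P μ, IsChainFor G D γ P μ →
      (∀ x, μ x = ∑ z ∈ univ.filter (fun z => G x z), D x z * γ z x) ∧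
      (∀ x y, G x y →
        P x y = D x y * γ x y / ∑ z ∈ univ.filter (fun z => G x z), D x z * γ z x)) := by
  refine ⟨⟨fun ⟨P, μ, hc⟩ => ⟨fun x => ?_, hc.sum_inflow_eq_one hGsym hDsym⟩,
    fun ⟨hbal, hsum⟩ => ⟨networkChain G D γ, inflow G D γ, ?_⟩⟩,
    fun P μ hc => ⟨hc.eq_inflow hGsym hDsym, fun x y => hc.eq_div_inflow hGsym hDsym⟩⟩
  · exact (hc.outflow_eq hGsym x).trans (hc.eq_inflow hGsym hDsym x)
  · exact isChainFor_networkChain hGsym hDpos hDsym hγpos hγanti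
      (exists_adj_of_sum_inflow_eq_one hconn hsum) hbal hsum

/-- characterisation of Markovian networks, with the formulas for
`μ` and `P` in the Markovian case. -/
theorem markovian_characterization
    (G : V → V → Prop) [DecidableRel G]
    (hGsym : ∀ x y, G x y → G y x)
    (hconn : ∀ x y : V, Relation.ReflTransGen G x y)
    (D γ : V → V → ℝ)
    (hDpos : ∀ x y, G x y → 0 < D x y)
    (hDsym : ∀ x y, D x y = D y x)
    (hγpos : ∀ x y, G x y → 0 < γ x y)
    (hγanti : ∀ x y, G x y → γ x y * γ y x = 1)
    (hγloop : ∀ x, G x x → γ x x = 1) :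
    ((∃ P μ, IsChainFor G D γ P μ) ↔
      ((∀ x, ∑ z ∈ univ.filter (fun z => G x z), D x z * γ x z =
          ∑ z ∈ univ.filter (fun z => G x z), D x z * γ z x) ∧
        ∑ x, ∑ z ∈ univ.filter (fun z => G x z), D x z * γ z x = 1)) ∧
    (∀ P μ, IsChainFor G D γ P μ →
      (∀ x, μ x = ∑ z ∈ univ.filter (fun z => G x z), D x z * γ z x) ∧
      (∀ x y, G x y →
        P x y = D x y * γ x y / ∑ z ∈ univ.filter (fun z => G x z), D x z * γ z x)) :=
  markovian_characterization_general G hGsym hconn D γ hDpos hDsym hγpos hγanti
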